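/- arXiv:2411.18563 — 3 statements merged into one kernel-verified Lean document; each statement's English description precedes it below -/
import Mathlib

section
/- Fix c > 0 and η ∈ [0,1). Then there is exactly one ζ ∈ [0,1] satisfying (1−ζ)·( W(2ζc²)/(2ζc²) )^{3/2} = η, where the left-hand side is interpreted as 1 at ζ = 0. Moreover, if in addition c < c̄(η), then this ζ satisfies e·ζ·c² < 1. -/
open Filter
open scoped BigOperators symmDiff Classical

noncomputable section

/-- Number of edges of a labeled simple graph on `Fin n`. -/
def edgeCount {n : ℕ} (G : SimpleGraph (Fin n)) : ℕ := Nat.card G.edgeSet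

/-- Number of triangles of a labeled simple graph on `Fin n`. -/
def triCount {n : ℕ} (G : SimpleGraph (Fin n)) : ℕ :=
  Nat.card {s : Finset (Fin n) // G.IsNClique 3 s}

/-- Probability of the event `A` under the Erdős–Rényi random graph `G(n,p)`. -/
def erProb (n : ℕ) (p : ℝ) (A : Set (SimpleGraph (Fin n))) : ℝ :=
  ∑ G : SimpleGraph (Fin n),
    if G ∈ A then p ^ edgeCount G * (1 - p) ^ (n.choose 2 - edgeCount G) else 0

/-- Conditional probability `P_p(A | B)` for `G(n,p)`. -/
def erCondProb (n : ℕ) (p : ℝ) (A B : Set (SimpleGraph (Fin n))) : ℝ :=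
  erProb n p (A ∩ B) / erProb n p B

/-- Probability of the event `A` under the uniform random graph `G(n,m)`. -/
def gnmProb (n m : ℕ) (A : Set (SimpleGraph (Fin n))) : ℝ :=
  (Nat.card {G : SimpleGraph (Fin n) // edgeCount G = m ∧ G ∈ A} : ℝ) /
    ((n.choose 2).choose m : ℝ)

/-- Expected number of triangles of `G(n,m)`. -/
def gnmExpTri (n m : ℕ) : ℝ :=
  (∑ G : SimpleGraph (Fin n), if edgeCount G = m then (triCount G : ℝ) else 0) /
    ((n.choose 2).choose m : ℝ)

/-- Gibbs weight `λ^{|G|} (1-ζ)^{X(G)}`. -/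
def gibbsWeight {n : ℕ} (lam zeta : ℝ) (G : SimpleGraph (Fin n)) : ℝ :=
  lam ^ edgeCount G * (1 - zeta) ^ triCount G

/-- The partition function `Z(λ,ζ)`. -/
def Zfun (n : ℕ) (lam zeta : ℝ) : ℝ := ∑ G : SimpleGraph (Fin n), gibbsWeight lam zeta G

/-- Probability of the event `A` under the Gibbs measure `μ_{λ,ζ}`. -/
def gibbsProb (n : ℕ) (lam zeta : ℝ) (A : Set (SimpleGraph (Fin n))) : ℝ :=
  (∑ G : SimpleGraph (Fin n), if G ∈ A then gibbsWeight lam zeta G else 0) / Zfun n lam zeta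

/-- Expectation of `f` under the Gibbs measure `μ_{λ,ζ}`. -/
def gibbsExp (n : ℕ) (lam zeta : ℝ) (f : SimpleGraph (Fin n) → ℝ) : ℝ :=
  (∑ G : SimpleGraph (Fin n), f G * gibbsWeight lam zeta G) / Zfun n lam zeta

/-- Number of edges of `H` with both endpoints in `S`. -/
def edgesIn {V : Type*} (H : SimpleGraph V) (S : Finset V) : ℕ :=
  Nat.card {e : Sym2 V // e ∈ H.edgeSet ∧ ∀ v ∈ e, v ∈ S}

/-- Weight `λ^{|S|} (1-ζ)^{|E(S)|}` of the measure `ν_{H,λ,ζ}`. -/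
def nuWeight {V : Type*} (H : SimpleGraph V) (lam zeta : ℝ) (S : Finset V) : ℝ :=
  lam ^ S.card * (1 - zeta) ^ edgesIn H S

/-- The partition function `Ξ_H(λ,ζ)`. -/
def XiFun {V : Type*} [Fintype V] (H : SimpleGraph V) (lam zeta : ℝ) : ℝ :=
  ∑ S : Finset V, nuWeight H lam zeta S

/-- The probability of `S` under `ν_{H,λ,ζ}`. -/
def nuProb {V : Type*} [Fintype V] (H : SimpleGraph V) (lam zeta : ℝ) (S : Finset V) : ℝ :=
  nuWeight H lam zeta S / XiFun H lam zeta

/-- `W` is the Lambert-W function on `[0,∞)`: for `x ≥ 0`, `W x` is the unique `w ≥ 0`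
with `w·e^w = x`. -/
def IsLambertW (W : ℝ → ℝ) : Prop :=
  ∀ x : ℝ, 0 ≤ x → (0 ≤ W x ∧ W x * Real.exp (W x) = x ∧
    ∀ w : ℝ, 0 ≤ w → w * Real.exp w = x → w = W x)

/-- `η* = (W(2/e)/(2/e))^{3/2}`. -/
def etaStar (W : ℝ → ℝ) : ℝ := (W (2 / Real.exp 1) / (2 / Real.exp 1)) ^ ((3 : ℝ) / 2)

/-- The condition `c < c̄(η)` where `c̄(η) = 1/√(e(1−η/η*))` for `η < η*` and `+∞` otherwise. -/
def LtCbar (W : ℝ → ℝ) (c η : ℝ) : Prop :=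
  η < etaStar W → c < 1 / Real.sqrt (Real.exp 1 * (1 - η / etaStar W))

/-- The left-hand side of the equation defining `ζ(c,η)`, interpreted as `1` at `ζ = 0`. -/
def zetaLHS (W : ℝ → ℝ) (c zeta : ℝ) : ℝ :=
  (1 - zeta) * (if zeta = 0 then 1 else
    (W (2 * zeta * c ^ 2) / (2 * zeta * c ^ 2)) ^ ((3 : ℝ) / 2))



lemma texp_le {s t : ℝ} (hs : 0 ≤ s) (hst : s ≤ t) : s * Real.exp s ≤ t * Real.exp t :=
  mul_le_mul hst (Real.exp_le_exp.2 hst) (Real.exp_pos s).le (hs.trans hst)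

lemma texp_lt {s t : ℝ} (hs : 0 ≤ s) (hst : s < t) : s * Real.exp s < t * Real.exp t :=
  lt_of_le_of_lt (mul_le_mul_of_nonneg_left (Real.exp_le_exp.2 hst.le) hs)
    (mul_lt_mul_of_pos_right hst (Real.exp_pos t))

lemma W_eq_of {W : ℝ → ℝ} (hW : IsLambertW W) {w : ℝ} (hw : 0 ≤ w) :
    W (w * Real.exp w) = w :=
  ((hW _ (mul_nonneg hw (Real.exp_pos w).le)).2.2 w hw rfl).symm

lemma W_pos {W : ℝ → ℝ} (hW : IsLambertW W) {x : ℝ} (hx : 0 < x) : 0 < W x := by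
  obtain ⟨h0, heq, -⟩ := hW x hx.le
  rcases h0.lt_or_eq with h | h
  · exact h
  · exfalso; rw [← h] at heq; simp at heq; linarith

lemma W_lt {W : ℝ → ℝ} (hW : IsLambertW W) {x y : ℝ} (hx : 0 ≤ x) (hxy : x < y) :
    W x < W y := by
  by_contra h
  push_neg at h
  have h1 := (hW x hx).2.1
  have h2 := (hW y (hx.trans hxy.le)).2.1
  have := texp_le (hW y (hx.trans hxy.le)).1 h
  rw [h2, h1] at this
  linarith

lemma pow_calc {w : ℝ} (hw : 0 < w) :
    (w / (w * Real.exp w)) ^ ((3:ℝ)/2) = Real.exp (-(3/2) * w) := by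
  rw [div_mul_cancel_left₀ hw.ne', ← Real.exp_neg, ← Real.exp_mul]
  ring_nf

lemma pow_calc' {W : ℝ → ℝ} (hW : IsLambertW W) {x : ℝ} (hx : 0 < x) :
    (W x / x) ^ ((3:ℝ)/2) = Real.exp (-(3/2) * W x) := by
  have heq := (hW x hx.le).2.1
  calc (W x / x) ^ ((3:ℝ)/2) = (W x / (W x * Real.exp (W x))) ^ ((3:ℝ)/2) := by rw [heq]
    _ = Real.exp (-(3/2) * W x) := pow_calc (W_pos hW hx)

lemma zetaLHS_eq {W : ℝ → ℝ} (hW : IsLambertW W) {c : ℝ} (hc : 0 < c) {z : ℝ} (hz : 0 ≤ z) :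
    zetaLHS W c z = (1 - z) * Real.exp (-(3/2) * W (2 * z * c ^ 2)) := by
  rcases hz.eq_or_lt with h | h
  · subst h
    have h0 : W 0 = 0 := by
      have := W_eq_of hW (le_refl (0:ℝ)); simpa using this
    simp [zetaLHS, h0]
  · have hx : 0 < 2 * z * c ^ 2 := by positivity
    rw [zetaLHS, if_neg h.ne', pow_calc' hW hx]

lemma etaStar_eq {W : ℝ → ℝ} (hW : IsLambertW W) :
    etaStar W = Real.exp (-(3/2) * W (2 / Real.exp 1)) := by
  have hx : (0:ℝ) < 2 / Real.exp 1 := by positivity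
  exact pow_calc' hW hx


/-- **Claim (existence and uniqueness of `ζ(c,η)`, and the bound `e·ζ·c² < 1` for
`c < c̄(η)`).** -/
theorem zeta_unique_and_bound
    (W : ℝ → ℝ) (hW : IsLambertW W)
    (c η : ℝ) (hc : 0 < c) (hη : η ∈ Set.Ico (0 : ℝ) 1) :
    (∃! zeta : ℝ, zeta ∈ Set.Icc (0 : ℝ) 1 ∧ zetaLHS W c zeta = η) ∧
    (LtCbar W c η →
      ∀ zeta : ℝ, zeta ∈ Set.Icc (0 : ℝ) 1 → zetaLHS W c zeta = η →
        Real.exp 1 * zeta * c ^ 2 < 1) := by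
  obtain ⟨hη0, hη1⟩ := hη
  have hc2 : (0:ℝ) < 2 * c ^ 2 := by positivity
  -- strict antitonicity of zetaLHS on [0,1]
  have hanti : ∀ z1 ∈ Set.Icc (0:ℝ) 1, ∀ z2 ∈ Set.Icc (0:ℝ) 1, z1 < z2 →
      zetaLHS W c z2 < zetaLHS W c z1 := by
    intro z1 hz1 z2 hz2 h12
    rw [zetaLHS_eq hW hc hz1.1, zetaLHS_eq hW hc hz2.1]
    have hWlt : W (2 * z1 * c ^ 2) < W (2 * z2 * c ^ 2) := by
      apply W_lt hW (mul_nonneg (by linarith [hz1.1]) (sq_nonneg c))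
      nlinarith
    have hE : Real.exp (-(3/2) * W (2 * z2 * c ^ 2)) < Real.exp (-(3/2) * W (2 * z1 * c ^ 2)) :=
      Real.exp_lt_exp.2 (by linarith)
    have h1 : (1 - z2) * Real.exp (-(3/2) * W (2 * z2 * c ^ 2)) ≤
        (1 - z2) * Real.exp (-(3/2) * W (2 * z1 * c ^ 2)) :=
      mul_le_mul_of_nonneg_left hE.le (by linarith [hz2.2])
    have h2 : (1 - z2) * Real.exp (-(3/2) * W (2 * z1 * c ^ 2)) <
        (1 - z1) * Real.exp (-(3/2) * W (2 * z1 * c ^ 2)) :=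
      mul_lt_mul_of_pos_right (by linarith) (Real.exp_pos _)
    exact h1.trans_lt h2
  -- existence via IVT in the w-variable
  set b := W (2 * c ^ 2) with hbdef
  obtain ⟨hb0, hbe, -⟩ := hW _ hc2.le
  set φ : ℝ → ℝ := fun w => (1 - w * Real.exp w / (2 * c ^ 2)) * Real.exp (-(3/2) * w) with hφdef
  have hφcont : ContinuousOn φ (Set.Icc 0 b) := by
    apply Continuous.continuousOn
    fun_prop
  have hφ0 : φ 0 = 1 := by simp [hφdef]
  have hφb : φ b = 0 := by
    simp only [hφdef]
    rw [hbe, div_self hc2.ne', sub_self, zero_mul]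
  have hmem : η ∈ Set.Icc (φ b) (φ 0) := by rw [hφ0, hφb]; exact ⟨hη0, hη1.le⟩
  obtain ⟨w0, hw0mem, hw0⟩ := intermediate_value_Icc' hb0 hφcont hmem
  have hw0pos : 0 < w0 := by
    rcases hw0mem.1.eq_or_lt with h | h
    · exfalso; rw [← h, hφ0] at hw0; linarith
    · exact h
  have hw0eq : (1 - w0 * Real.exp w0 / (2 * c ^ 2)) * Real.exp (-(3/2) * w0) = η := hw0
  set ζ0 := w0 * Real.exp w0 / (2 * c ^ 2) with hζ0def
  have hζ0pos : 0 < ζ0 := by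
    rw [hζ0def]
    exact div_pos (mul_pos hw0pos (Real.exp_pos w0)) hc2
  have hEpos := Real.exp_pos (-(3/2) * w0)
  have hζ0le : ζ0 ≤ 1 := by
    by_contra h
    push_neg at h
    have hneg : (1 - ζ0) * Real.exp (-(3/2) * w0) < 0 :=
      mul_neg_of_neg_of_pos (by linarith) hEpos
    rw [hw0eq] at hneg
    linarith
  have hx0 : 2 * ζ0 * c ^ 2 = w0 * Real.exp w0 := by
    rw [hζ0def]; field_simp
  have hWζ0 : W (2 * ζ0 * c ^ 2) = w0 := by rw [hx0]; exact W_eq_of hW hw0pos.le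
  have hζ0eq : zetaLHS W c ζ0 = η := by
    rw [zetaLHS_eq hW hc hζ0pos.le, hWζ0]
    exact hw0eq
  constructor
  · refine ⟨ζ0, ⟨⟨hζ0pos.le, hζ0le⟩, hζ0eq⟩, ?_⟩
    intro z ⟨hzmem, hzeq⟩
    rcases lt_trichotomy z ζ0 with h | h | h
    · exfalso
      have := hanti z hzmem ζ0 ⟨hζ0pos.le, hζ0le⟩ h
      rw [hzeq, hζ0eq] at this; linarith
    · exact h
    · exfalso
      have := hanti ζ0 ⟨hζ0pos.le, hζ0le⟩ z hzmem h
      rw [hzeq, hζ0eq] at this; linarith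
  · -- second part
    intro hlt z hz hzeq
    have hzpos : 0 < z := by
      rcases hz.1.eq_or_lt with h | h
      · exfalso
        rw [← h] at hzeq
        simp [zetaLHS] at hzeq
        linarith
      · exact h
    have hx : (0:ℝ) < 2 * z * c ^ 2 := by positivity
    obtain ⟨hwx0, hwxe, -⟩ := hW _ hx.le
    set w := W (2 * z * c ^ 2) with hwdef
    have hwpos : 0 < w := W_pos hW hx
    have h2e : (0:ℝ) < 2 / Real.exp 1 := by positivity
    obtain ⟨ha0, hae, -⟩ := hW _ h2e.le
    set a := W (2 / Real.exp 1) with hadef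
    have hapos : 0 < a := W_pos hW h2e
    rw [zetaLHS_eq hW hc hz.1] at hzeq
    have hetaS : etaStar W = Real.exp (-(3/2) * a) := etaStar_eq hW
    have hwa : w < a := by
      by_contra hcon
      push_neg at hcon  -- a ≤ w
      have hx2e : 2 / Real.exp 1 ≤ 2 * z * c ^ 2 := by
        rw [← hae, ← hwxe]; exact texp_le ha0 hcon
      have hEw := Real.exp_pos (-(3/2) * w)
      have hEle : Real.exp (-(3/2) * w) ≤ Real.exp (-(3/2) * a) :=
        Real.exp_le_exp.2 (by linarith)
      have hηlt : η < etaStar W := by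
        rw [hetaS]
        calc η = (1 - z) * Real.exp (-(3/2) * w) := hzeq.symm
          _ < 1 * Real.exp (-(3/2) * w) := mul_lt_mul_of_pos_right (by linarith) hEw
          _ ≤ Real.exp (-(3/2) * a) := by rw [one_mul]; exact hEle
      have hcb := hlt hηlt
      have hesp : 0 < etaStar W := by rw [hetaS]; exact Real.exp_pos _
      have hD : 0 < 1 - η / etaStar W := by
        have : η / etaStar W < 1 := (div_lt_one hesp).2 hηlt
        linarith
      have hDe : 0 < Real.exp 1 * (1 - η / etaStar W) := by positivity
      have hsq : 0 < Real.sqrt (Real.exp 1 * (1 - η / etaStar W)) := Real.sqrt_pos.2 hDe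
      have h1 : c * Real.sqrt (Real.exp 1 * (1 - η / etaStar W)) < 1 :=
        (lt_div_iff₀ hsq).1 hcb
      have h2 : c ^ 2 * (Real.exp 1 * (1 - η / etaStar W)) < 1 := by
        have heq : c ^ 2 * (Real.exp 1 * (1 - η / etaStar W)) =
            (c * Real.sqrt (Real.exp 1 * (1 - η / etaStar W))) ^ 2 := by
          rw [mul_pow, Real.sq_sqrt hDe.le]
        rw [heq]
        exact pow_lt_one₀ (by positivity) h1 two_ne_zero
      -- lower bound: η ≤ (1 - 1/(e c²)) η*
      have h1z : 1 - z ≤ 1 - (2 / Real.exp 1) / (2 * c ^ 2) := by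
        have hmul : z * (2 * c ^ 2) = 2 * z * c ^ 2 := by ring
        have : (2 / Real.exp 1) / (2 * c ^ 2) ≤ z := by
          rw [div_le_iff₀ hc2]
          linarith
        linarith
      have hu0 : 0 ≤ 1 - z := by linarith [hz.2]
      have hηle : η ≤ (1 - (2 / Real.exp 1) / (2 * c ^ 2)) * etaStar W := by
        rw [hetaS, ← hzeq]
        exact mul_le_mul h1z hEle hEw.le (by linarith)
      have hdiv : η / etaStar W ≤ 1 - (2 / Real.exp 1) / (2 * c ^ 2) :=
        (div_le_iff₀ hesp).2 hηle
      have h1u : (2 / Real.exp 1) / (2 * c ^ 2) = 1 / (Real.exp 1 * c ^ 2) := by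
        field_simp
      have hle : 1 / (Real.exp 1 * c ^ 2) ≤ 1 - η / etaStar W := by
        rw [← h1u]; linarith
      have hecp : (0:ℝ) < Real.exp 1 * c ^ 2 := by positivity
      have hfin := (div_le_iff₀ hecp).1 hle
      linarith
    -- conclude
    have hxlt : 2 * z * c ^ 2 < 2 / Real.exp 1 := by
      rw [← hwxe, ← hae]; exact texp_lt hwx0 hwa
    have hep := Real.exp_pos 1
    have hmul := mul_lt_mul_of_pos_left hxlt hep
    have h4 : Real.exp 1 * (2 / Real.exp 1) = 2 := by field_simp
    linarith
end
end

section
/- Let n ≥ 1, λ ≥ 0, ζ ∈ [0,1], and set p = λ/(1+λ). Then the expected number of edges of a sample G from μ_{λ,ζ} satisfies E_{μ_{λ,ζ}} |G| ≥ C(n,2)·p·(1−p²)^n. -/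
open Filter
open scoped BigOperators symmDiff Classical

noncomputable section

/-! Adding a missing edge `ab` to a graph multiplies its Gibbs weight by `λ (1-ζ)^c`, where `c` is
the number of common neighbours of `a` and `b`: by at most `λ`, and by exactly `λ` when `c = 0`.
The first fact says that, conditionally on the rest of the graph, an edge is present with
probability at most `p`. Conditionally on `ab ∉ G` and on none of the vertices examined so far
being a common neighbour of `a` and `b`, a new vertex `k` is one with probability at most `p²`
(first `bk` is present, then `ak`), so `μ(ab ∉ G, a and b have no common neighbour)` is at least
`(1 - p)(1 - p²)^n`. Adding `ab` to each of these graphs multiplies the weight by exactly `λ`,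
so `μ(ab ∈ G) ≥ λ(1 - p)(1 - p²)^n = p(1 - p²)^n`. Sum over the `C(n,2)` pairs. -/

namespace SimpleGraph

variable {V : Type*}

lemma sup_edge_adj_iff_of_ne {G : SimpleGraph V} {a k x y : V} (hx : x ≠ k) (hy : y ≠ k) :
    (G ⊔ edge a k).Adj x y ↔ G.Adj x y := by
  rw [sup_adj, edge_adj]
  simp only [hx, hy, and_false, false_and, or_false]

lemma commonNeighbors_sup_edge (G : SimpleGraph V) (a b : V) :
    (G ⊔ edge a b).commonNeighbors a b = G.commonNeighbors a b := by
  obtain rfl | hab := eq_or_ne a b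
  · rw [sup_edge_self]
  ext l
  simp only [mem_commonNeighbors]
  refine ⟨fun ⟨hal, hbl⟩ => ?_, fun ⟨hal, hbl⟩ => ⟨Or.inl hal, Or.inl hbl⟩⟩
  exact ⟨(sup_edge_adj_iff_of_ne hab hbl.ne.symm).1 hal,
    (sup_edge_adj_iff_of_ne hab.symm hal.ne.symm).1 (edge_comm a b ▸ hbl)⟩

lemma cliqueSet_three_sup_edge_of_commonNeighbors_eq_empty {G : SimpleGraph V} {a b : V}
    (h : G.commonNeighbors a b = ∅) : (G ⊔ edge a b).cliqueSet 3 = G.cliqueSet 3 := by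
  classical
  obtain rfl | hab := eq_or_ne a b
  · rw [sup_edge_self]
  refine (cliqueSet_mono le_sup_left).antisymm' fun s hs => ?_
  rw [mem_cliqueSet_iff] at hs ⊢
  have hsa := hs.isClique.sdiff_of_sup_edge
  have hsb := (edge_comm a b ▸ hs).isClique.sdiff_of_sup_edge
  by_cases ha : a ∈ s
  · by_cases hb : b ∈ s
    · obtain ⟨l, hl, hlab⟩ : ∃ l ∈ s, l ∉ ({a, b} : Finset V) :=
        Finset.exists_mem_notMem_of_card_lt_card
          (Finset.card_le_two.trans_lt (by simp [hs.card_eq]))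
      simp only [Finset.mem_insert, Finset.mem_singleton, not_or] at hlab
      refine absurd (G.mem_commonNeighbors.2 ⟨?_, ?_⟩) (h ▸ Set.notMem_empty l)
      · exact hsb ⟨ha, hab⟩ ⟨hl, hlab.2⟩ (Ne.symm hlab.1)
      · exact hsa ⟨hb, hab.symm⟩ ⟨hl, hlab.1⟩ (Ne.symm hlab.2)
    · exact ⟨by simpa [hb] using hsb, hs.card_eq⟩
  · exact ⟨by simpa [ha] using hsa, hs.card_eq⟩

lemma sum_filter_adj_eq_sum_filter_not_adj_sup_edge [Fintype V] [DecidableEq V]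
    {β : Type*} [AddCommMonoid β] {P : SimpleGraph V → Prop} [DecidablePred P] {a b : V}
    (hab : a ≠ b) (hP : ∀ H, P (H ⊔ edge a b) ↔ P H) (F : SimpleGraph V → β) :
    ∑ H with P H ∧ H.Adj a b, F H = ∑ H with P H ∧ ¬H.Adj a b, F (H ⊔ edge a b) := by
  have hab' : (edge a b).Adj a b := (edge_adj a b a b).2 ⟨Or.inl ⟨rfl, rfl⟩, hab⟩
  have hcancel : ∀ H : SimpleGraph V, H.Adj a b → H \ edge a b ⊔ edge a b = H := fun H h =>
    sdiff_sup_cancel (H.edge_le_iff.2 (Or.inr h))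
  refine Finset.sum_nbij' (· \ edge a b) (· ⊔ edge a b) ?_ ?_ ?_ ?_ ?_ <;>
    simp only [Finset.mem_filter, Finset.mem_univ, true_and, and_imp]
  · intro H hPH h
    exact ⟨(hP _).1 ((hcancel H h).symm ▸ hPH), fun h' => h'.2 hab'⟩
  · exact fun H hPH _ => ⟨(hP H).2 hPH, Or.inr hab'⟩
  · exact fun H _ h => hcancel H h
  · exact fun H _ h => by rw [sup_sdiff_right_self, sdiff_edge _ h]
  · exact fun H _ h => by rw [hcancel H h]

end SimpleGraph

open SimpleGraph

variable {n : ℕ}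

lemma edgeCount_sup_edge {G : SimpleGraph (Fin n)} {a b : Fin n} (hab : a ≠ b)
    (h : ¬G.Adj a b) : edgeCount (G ⊔ edge a b) = edgeCount G + 1 := by
  simp only [edgeCount, Nat.card_eq_fintype_card, ← edgeFinset_card]
  exact card_edgeFinset_sup_edge G h hab

lemma triCount_eq_ncard (G : SimpleGraph (Fin n)) : triCount G = (G.cliqueSet 3).ncard := rfl

lemma triCount_mono {G H : SimpleGraph (Fin n)} (h : G ≤ H) : triCount G ≤ triCount H :=
  Set.ncard_le_ncard (cliqueSet_mono h) (Set.toFinite _)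

section Weight

variable {lam zeta : ℝ}

lemma gibbsWeight_bot (lam zeta : ℝ) : gibbsWeight lam zeta (⊥ : SimpleGraph (Fin n)) = 1 := by
  have : triCount (⊥ : SimpleGraph (Fin n)) = 0 := by
    simp [triCount_eq_ncard, ((cliqueFree_bot le_rfl).mono (by norm_num : 2 ≤ 3)).cliqueSet]
  simp [gibbsWeight, edgeCount, this]

lemma gibbsWeight_nonneg (hlam : 0 ≤ lam) (hzeta : zeta ≤ 1) (G : SimpleGraph (Fin n)) :
    0 ≤ gibbsWeight lam zeta G :=
  mul_nonneg (pow_nonneg hlam _) (pow_nonneg (sub_nonneg.2 hzeta) _)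

lemma gibbsWeight_sup_edge_le (hlam : 0 ≤ lam) (hzeta : zeta ∈ Set.Icc (0 : ℝ) 1)
    {G : SimpleGraph (Fin n)} {a b : Fin n} (hab : a ≠ b) (h : ¬G.Adj a b) :
    gibbsWeight lam zeta (G ⊔ edge a b) ≤ lam * gibbsWeight lam zeta G := by
  have hc : (1 - zeta) ^ triCount (G ⊔ edge a b) ≤ (1 - zeta) ^ triCount G :=
    pow_le_pow_of_le_one (by linarith [hzeta.2]) (by linarith [hzeta.1])
      (triCount_mono le_sup_left)
  rw [gibbsWeight, gibbsWeight, edgeCount_sup_edge hab h, pow_succ, mul_comm _ lam, mul_assoc]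
  exact mul_le_mul_of_nonneg_left (mul_le_mul_of_nonneg_left hc (by positivity)) hlam

lemma gibbsWeight_sup_edge_of_commonNeighbors_eq_empty {G : SimpleGraph (Fin n)} {a b : Fin n}
    (hab : a ≠ b) (h : ¬G.Adj a b) (hcn : G.commonNeighbors a b = ∅) :
    gibbsWeight lam zeta (G ⊔ edge a b) = lam * gibbsWeight lam zeta G := by
  rw [gibbsWeight, gibbsWeight, edgeCount_sup_edge hab h, triCount_eq_ncard,
    cliqueSet_three_sup_edge_of_commonNeighbors_eq_empty hcn, ← triCount_eq_ncard, pow_succ]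
  ring

lemma Zfun_pos (hlam : 0 ≤ lam) (hzeta : zeta ≤ 1) : 0 < Zfun n lam zeta := by
  refine one_pos.trans_le ?_
  rw [← gibbsWeight_bot lam zeta]
  exact Finset.single_le_sum (fun G _ => gibbsWeight_nonneg hlam hzeta G) (Finset.mem_univ ⊥)

end Weight

def gibbsMass (lam zeta : ℝ) (P : SimpleGraph (Fin n) → Prop) [DecidablePred P] : ℝ :=
  ∑ G with P G, gibbsWeight lam zeta G

lemma sq_div_one_add_le_one {lam : ℝ} (hlam : 0 ≤ lam) : (lam / (1 + lam)) ^ 2 ≤ 1 :=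
  pow_le_one₀ (by positivity) (div_le_one_of_le₀ (by linarith) (by linarith))

section Mass

variable {lam zeta : ℝ}

lemma Zfun_eq_gibbsMass_true :
    Zfun n lam zeta = gibbsMass lam zeta (fun _ : SimpleGraph (Fin n) => True) := by
  simp [Zfun, gibbsMass]

lemma gibbsMass_congr {P Q : SimpleGraph (Fin n) → Prop} [DecidablePred P] [DecidablePred Q]
    (h : ∀ G, P G ↔ Q G) : gibbsMass lam zeta P = gibbsMass lam zeta Q := by
  simp only [gibbsMass, h]

lemma gibbsMass_nonneg (hlam : 0 ≤ lam) (hzeta : zeta ≤ 1) (P : SimpleGraph (Fin n) → Prop)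
    [DecidablePred P] : 0 ≤ gibbsMass lam zeta P :=
  Finset.sum_nonneg fun G _ => gibbsWeight_nonneg hlam hzeta G

lemma gibbsMass_mono (hlam : 0 ≤ lam) (hzeta : zeta ≤ 1) {P Q : SimpleGraph (Fin n) → Prop}
    [DecidablePred P] [DecidablePred Q] (h : ∀ G, P G → Q G) :
    gibbsMass lam zeta P ≤ gibbsMass lam zeta Q :=
  Finset.sum_le_sum_of_subset_of_nonneg (Finset.monotone_filter_right _ fun G _ => h G)
    fun G _ _ => gibbsWeight_nonneg hlam hzeta G

lemma gibbsMass_and_add_gibbsMass_and_not (P Q : SimpleGraph (Fin n) → Prop) [DecidablePred P]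
    [DecidablePred Q] :
    gibbsMass lam zeta (fun G => P G ∧ Q G) + gibbsMass lam zeta (fun G => P G ∧ ¬Q G) =
      gibbsMass lam zeta P := by
  simp only [gibbsMass, ← Finset.filter_filter, Finset.sum_filter_add_sum_filter_not]

lemma gibbsMass_and_adj_eq {P : SimpleGraph (Fin n) → Prop} [DecidablePred P] {a b : Fin n}
    (hab : a ≠ b) (hP : ∀ H, P (H ⊔ edge a b) ↔ P H)
    (hcn : ∀ G, P G → G.commonNeighbors a b = ∅) :
    gibbsMass lam zeta (fun G => P G ∧ G.Adj a b) =
      lam * gibbsMass lam zeta (fun G => P G ∧ ¬G.Adj a b) := by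
  rw [gibbsMass, gibbsMass, sum_filter_adj_eq_sum_filter_not_adj_sup_edge hab hP,
    Finset.mul_sum]
  refine Finset.sum_congr rfl fun G hG => ?_
  obtain ⟨hPG, hG⟩ := (Finset.mem_filter.1 hG).2
  exact gibbsWeight_sup_edge_of_commonNeighbors_eq_empty hab hG (hcn G hPG)

variable (hlam : 0 ≤ lam) (hzeta : zeta ∈ Set.Icc (0 : ℝ) 1)
include hlam hzeta

lemma gibbsMass_and_adj_le {P : SimpleGraph (Fin n) → Prop} [DecidablePred P] {a b : Fin n}
    (hab : a ≠ b) (hP : ∀ H, P (H ⊔ edge a b) ↔ P H) :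
    gibbsMass lam zeta (fun G => P G ∧ G.Adj a b) ≤
      lam * gibbsMass lam zeta (fun G => P G ∧ ¬G.Adj a b) := by
  rw [gibbsMass, gibbsMass, sum_filter_adj_eq_sum_filter_not_adj_sup_edge hab hP,
    Finset.mul_sum]
  refine Finset.sum_le_sum fun G hG => gibbsWeight_sup_edge_le hlam hzeta hab ?_
  exact (Finset.mem_filter.1 hG).2.2

lemma gibbsMass_and_adj_le_mul {P : SimpleGraph (Fin n) → Prop} [DecidablePred P]
    {a b : Fin n} (hab : a ≠ b) (hP : ∀ H, P (H ⊔ edge a b) ↔ P H) :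
    gibbsMass lam zeta (fun G => P G ∧ G.Adj a b) ≤ lam / (1 + lam) * gibbsMass lam zeta P := by
  have h := gibbsMass_and_adj_le hlam hzeta hab hP
  rw [← gibbsMass_and_add_gibbsMass_and_not P (·.Adj a b), div_mul_eq_mul_div,
    le_div_iff₀ (by linarith)]
  linarith

lemma mul_gibbsMass_le_gibbsMass_and_not_both_adj {P : SimpleGraph (Fin n) → Prop}
    [DecidablePred P] {i j k : Fin n} (hij : i ≠ j) (hik : i ≠ k) (hjk : j ≠ k)
    (hPi : ∀ H, P (H ⊔ edge i k) ↔ P H) (hPj : ∀ H, P (H ⊔ edge j k) ↔ P H) :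
    (1 - (lam / (1 + lam)) ^ 2) * gibbsMass lam zeta P ≤
      gibbsMass lam zeta (fun G => P G ∧ ¬(G.Adj i k ∧ G.Adj j k)) := by
  have hQ : ∀ H, P (H ⊔ edge i k) ∧ (H ⊔ edge i k).Adj j k ↔ P H ∧ H.Adj j k := fun H => by
    rw [hPi, sup_adj, edge_adj]
    simp [hij.symm, hjk]
  have hboth := gibbsMass_and_adj_le_mul hlam hzeta (P := fun G => P G ∧ G.Adj j k) hik hQ
  have hj := gibbsMass_and_adj_le_mul hlam hzeta hjk hPj
  have hsplit := gibbsMass_and_add_gibbsMass_and_not (lam := lam) (zeta := zeta) P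
    (fun G => G.Adj i k ∧ G.Adj j k)
  rw [gibbsMass_congr (Q := fun G => P G ∧ G.Adj i k ∧ G.Adj j k) (by tauto)] at hboth
  have hp : 0 ≤ lam / (1 + lam) := by positivity
  nlinarith [mul_le_mul_of_nonneg_left hj hp]

lemma pow_mul_gibbsMass_not_adj_le_gibbsMass_noCommonNeighbors {i j : Fin n} (hij : i ≠ j)
    (K : Finset (Fin n)) :
    (1 - (lam / (1 + lam)) ^ 2) ^ K.card * gibbsMass lam zeta (fun G => ¬G.Adj i j) ≤
      gibbsMass lam zeta (fun G => ¬G.Adj i j ∧ ∀ l ∈ K, l ∉ G.commonNeighbors i j) := by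
  have hr : 0 ≤ 1 - (lam / (1 + lam)) ^ 2 ∧ 1 - (lam / (1 + lam)) ^ 2 ≤ 1 :=
    ⟨sub_nonneg.2 (sq_div_one_add_le_one hlam), sub_le_self _ (sq_nonneg _)⟩
  induction K using Finset.induction_on with
  | empty => simp
  | insert k K hkK ih =>
    rw [Finset.card_insert_of_notMem hkK, pow_succ, mul_comm _ (1 - _), mul_assoc]
    by_cases hk : k = i ∨ k = j
    · have hkcn : ∀ G : SimpleGraph (Fin n), k ∉ G.commonNeighbors i j := fun G => by
        rcases hk with rfl | rfl
        exacts [G.notMem_commonNeighbors_left _ _, G.notMem_commonNeighbors_right _ _]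
      refine (mul_le_of_le_one_left (mul_nonneg (pow_nonneg hr.1 _)
        (gibbsMass_nonneg hlam hzeta.2 _)) hr.2).trans (ih.trans_eq (gibbsMass_congr fun G => ?_))
      simp only [Finset.forall_mem_insert, hkcn G, not_false_eq_true, true_and]
    · obtain ⟨hik, hjk⟩ : i ≠ k ∧ j ≠ k := by
        rw [← not_or]
        exact fun h => hk (h.imp Eq.symm Eq.symm)
      have hP : ∀ a H, (¬(H ⊔ edge a k).Adj i j ∧
          ∀ l ∈ K, l ∉ (H ⊔ edge a k).commonNeighbors i j) ↔
            ¬H.Adj i j ∧ ∀ l ∈ K, l ∉ H.commonNeighbors i j := fun a H => by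
        refine and_congr (not_congr (sup_edge_adj_iff_of_ne hik hjk))
          (forall₂_congr fun l hl => ?_)
        have hlk : l ≠ k := ne_of_mem_of_not_mem hl hkK
        simp only [mem_commonNeighbors, sup_edge_adj_iff_of_ne hik hlk,
          sup_edge_adj_iff_of_ne hjk hlk]
      refine (mul_le_mul_of_nonneg_left ih hr.1).trans
        ((mul_gibbsMass_le_gibbsMass_and_not_both_adj hlam hzeta hij hik hjk (hP i)
          (hP j)).trans_eq (gibbsMass_congr fun G => ?_))
      simp only [Finset.forall_mem_insert, mem_commonNeighbors]
      tauto

lemma mul_Zfun_le_gibbsMass_adj {a b : Fin n} (hab : a ≠ b) :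
    lam / (1 + lam) * (1 - (lam / (1 + lam)) ^ 2) ^ n * Zfun n lam zeta ≤
      gibbsMass lam zeta (fun G => G.Adj a b) := by
  set p := lam / (1 + lam)
  set r := 1 - p ^ 2
  have hnot : (1 - p) * Zfun n lam zeta ≤ gibbsMass lam zeta (fun G => ¬G.Adj a b) := by
    have hadj := gibbsMass_and_adj_le_mul hlam hzeta (P := fun _ => True) hab (fun _ => Iff.rfl)
    have hsplit := gibbsMass_and_add_gibbsMass_and_not (lam := lam) (zeta := zeta)
      (fun _ => True) (·.Adj a b)
    simp only [true_and] at hadj hsplit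
    rw [Zfun_eq_gibbsMass_true]
    linarith
  have hchain := pow_mul_gibbsMass_not_adj_le_gibbsMass_noCommonNeighbors hlam hzeta hab
    Finset.univ
  rw [Finset.card_univ, Fintype.card_fin] at hchain
  have hcn := gibbsMass_mono hlam hzeta.2
    (P := fun G => ¬G.Adj a b ∧ ∀ l ∈ Finset.univ, l ∉ G.commonNeighbors a b)
    (Q := fun G => G.commonNeighbors a b = ∅ ∧ ¬G.Adj a b)
    fun G hG => ⟨Set.eq_empty_of_forall_notMem fun l => hG.2 l (Finset.mem_univ l), hG.1⟩
  have hadd := gibbsMass_and_adj_eq (lam := lam) (zeta := zeta) hab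
    (fun H => by rw [commonNeighbors_sup_edge]) fun _ => id
  have hsub := gibbsMass_mono hlam hzeta.2
    (P := fun G => G.commonNeighbors a b = ∅ ∧ G.Adj a b) (Q := (·.Adj a b)) fun _ => And.right
  have hp : p = lam * (1 - p) := by
    simp only [p]
    field_simp
    ring
  calc p * r ^ n * Zfun n lam zeta = lam * (r ^ n * ((1 - p) * Zfun n lam zeta)) := by
        linear_combination (r ^ n * Zfun n lam zeta) * hp
    _ ≤ lam * gibbsMass lam zeta (fun G => G.commonNeighbors a b = ∅ ∧ ¬G.Adj a b) := by
        gcongr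
        exact (mul_le_mul_of_nonneg_left hnot
          (pow_nonneg (sub_nonneg.2 (sq_div_one_add_le_one hlam)) _)).trans (hchain.trans hcn)
    _ ≤ _ := hadd ▸ hsub

end Mass

lemma sum_edgeCount_mul_gibbsWeight (lam zeta : ℝ) :
    ∑ G : SimpleGraph (Fin n), (edgeCount G : ℝ) * gibbsWeight lam zeta G =
      ∑ e : Sym2 (Fin n), gibbsMass lam zeta (fun G => e ∈ G.edgeSet) := by
  simp only [edgeCount, Nat.card_eq_fintype_card, ← edgeFinset_card, ← nsmul_eq_mul,
    ← Finset.sum_const, gibbsMass]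
  exact Finset.sum_comm' (by simp)

theorem gibbs_expected_edges_lower_bound_general
    (n : ℕ) (lam zeta : ℝ) (hlam : 0 ≤ lam)
    (hzeta : zeta ∈ Set.Icc (0 : ℝ) 1) :
    (n.choose 2 : ℝ) * (lam / (1 + lam)) * (1 - (lam / (1 + lam)) ^ 2) ^ n ≤
      gibbsExp n lam zeta (fun G => (edgeCount G : ℝ)) := by
  have hcard : (Finset.univ.filter fun e : Sym2 (Fin n) => ¬e.IsDiag).card = n.choose 2 := by
    rw [← Fintype.card_subtype, Sym2.card_subtype_not_diag, Fintype.card_fin]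
  rw [gibbsExp, le_div_iff₀ (Zfun_pos hlam hzeta.2), sum_edgeCount_mul_gibbsWeight, ← hcard,
    mul_assoc, mul_assoc, ← nsmul_eq_mul]
  refine (Finset.card_nsmul_le_sum _ _ _ fun e he => ?_).trans
    (Finset.sum_le_sum_of_subset_of_nonneg (Finset.filter_subset _ _)
      fun e _ _ => gibbsMass_nonneg hlam hzeta.2 _)
  induction e using Sym2.ind with
  | h a b =>
    have hab : a ≠ b := by simpa using (Finset.mem_filter.1 he).2
    rw [← mul_assoc, gibbsMass_congr fun G => G.mem_edgeSet]
    exact mul_Zfun_le_gibbsMass_adj hlam hzeta hab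

/-- **Lemma (lower bound on the expected number of edges under `μ_{λ,ζ}`).** -/
theorem gibbs_expected_edges_lower_bound
    (n : ℕ) (hn : 1 ≤ n) (lam zeta : ℝ) (hlam : 0 ≤ lam)
    (hzeta : zeta ∈ Set.Icc (0 : ℝ) 1) :
    (n.choose 2 : ℝ) * (lam / (1 + lam)) * (1 - (lam / (1 + lam)) ^ 2) ^ n ≤
      gibbsExp n lam zeta (fun G => (edgeCount G : ℝ)) :=
  gibbs_expected_edges_lower_bound_general n lam zeta hlam hzeta
end
end

section
/- Let H be a finite graph with maximum degree Δ and at least one vertex, let λ ≥ 0 and ζ ∈ [0,1]. Then for every pair of subsets y, z ⊆ V(H) there exists a coupling π of the random sets P_{H,λ,ζ} y and P_{H,λ,ζ} z such that the expectation under π of the Hamming distance between them is at most (1 − (1 − Δ·λ·ζ)/|V(H)|)·dist(y,z), where dist denotes Hamming distance (size of symmetric difference) of subsets of V(H). -/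
open Filter
open scoped BigOperators symmDiff Classical

noncomputable section

/-- The degree of `u` in the subgraph of `H` induced by `y ∪ {u}`. -/
def inducedDeg {V : Type*} (H : SimpleGraph V) (y : Finset V) (u : V) : ℕ :=
  Nat.card {w : V // w ∈ y ∧ H.Adj u w}

/-- The transition probability `y → z` of the single-step Glauber dynamics `P_{H,λ,ζ}` on
subsets of `V(H)`: a uniformly random vertex is resampled. -/
def vertexGlauberStep {V : Type*} [Fintype V] [DecidableEq V] (H : SimpleGraph V)
    (lam zeta : ℝ) (y z : Finset V) : ℝ :=
  (1 / (Fintype.card V : ℝ)) *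
    ∑ u : V,
      ((if z = insert u y then
          lam * (1 - zeta) ^ inducedDeg H y u / (1 + lam * (1 - zeta) ^ inducedDeg H y u)
        else 0) +
       (if z = y.erase u then 1 / (1 + lam * (1 - zeta) ^ inducedDeg H y u) else 0))

/-- Maximum degree of a finite graph. -/
def maxDegV {V : Type*} [Fintype V] (H : SimpleGraph V) : ℕ :=
  Finset.univ.sup (fun v => Nat.card (H.neighborSet v))

/-!
Couple the two chains by resampling the same uniformly chosen vertex `u` in both, using the
maximal coupling of the two heat-bath coins. Then `u` leaves the disagreement set `y ∆ z`, and
becomes a disagreement only with probability `|p_y(u) - p_z(u)|`, where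
`p(k) = λ(1-ζ)^k / (1 + λ(1-ζ)^k)` is the occupation probability given `k` occupied neighbours.
The map `k ↦ p(k)` is `λζ`-Lipschitz, and the occupied-neighbour counts of `u` in `y` and `z`
differ by at most the number of neighbours of `u` in `y ∆ z`; by double counting these add up
to at most `Δ |y ∆ z|` over all `u`. Averaging over `u`, the expected distance is at most
`((n - 1) |y ∆ z| + Δλζ |y ∆ z|) / n`.
-/

open scoped Finset

lemma abs_pow_sub_pow_le_of_le_one {t : ℝ} (ht₀ : 0 ≤ t) (ht₁ : t ≤ 1) (k m : ℕ) :
    |t ^ k - t ^ m| ≤ (1 - t) * |(k : ℝ) - m| := by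
  wlog hkm : k ≤ m generalizing k m
  · rw [abs_sub_comm, abs_sub_comm (k : ℝ)]
    exact this m k (le_of_not_ge hkm)
  obtain ⟨j, rfl⟩ := Nat.exists_eq_add_of_le hkm
  have hbernoulli : 1 + (j : ℝ) * (t - 1) ≤ t ^ j := by
    simpa using one_add_mul_le_pow (a := t - 1) (by linarith) j
  have htk : t ^ k ≤ 1 := pow_le_one₀ ht₀ ht₁
  have htj : t ^ j ≤ 1 := pow_le_one₀ ht₀ ht₁
  rw [pow_add, abs_of_nonneg (by nlinarith [pow_nonneg ht₀ k]),
    abs_of_nonpos (by push_cast; linarith)]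
  push_cast
  nlinarith [pow_nonneg ht₀ k]

lemma abs_div_one_add_sub_div_one_add_le {a b : ℝ} (ha : 0 ≤ a) (hb : 0 ≤ b) :
    |a / (1 + a) - b / (1 + b)| ≤ |a - b| := by
  have hden : 1 ≤ (1 + a) * (1 + b) := by nlinarith
  rw [div_sub_div _ _ (by positivity) (by positivity),
    show a * (1 + b) - (1 + a) * b = a - b by ring, abs_div,
    abs_of_pos (show 0 < (1 + a) * (1 + b) by positivity)]
  exact div_le_self (abs_nonneg _) hden

lemma one_div_mul_sub_one_mul_add_le {n d X c : ℝ} (hn : 0 ≤ n) (hd : 0 ≤ d) (hX : X ≤ c * d) :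
    1 / n * ((n - 1) * d + X) ≤ (1 - (1 - c) / n) * d := by
  rcases hn.eq_or_lt with rfl | hn
  · simpa using hd
  calc 1 / n * ((n - 1) * d + X) ≤ 1 / n * ((n - 1) * d + c * d) := by gcongr
    _ = (1 - (1 - c) / n) * d := by field_simp; ring

def heatBathProb (lam zeta : ℝ) (k : ℕ) : ℝ :=
  lam * (1 - zeta) ^ k / (1 + lam * (1 - zeta) ^ k)

section HeatBath

variable {lam zeta : ℝ} (hlam : 0 ≤ lam) (hzeta : zeta ≤ 1)
include hlam hzeta

lemma heatBathProb_mem_Icc (k : ℕ) : heatBathProb lam zeta k ∈ Set.Icc (0 : ℝ) 1 := by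
  have hx : 0 ≤ lam * (1 - zeta) ^ k := mul_nonneg hlam (pow_nonneg (by linarith) k)
  exact ⟨by unfold heatBathProb; positivity, (div_le_one (by positivity)).2 (by linarith)⟩

lemma one_sub_heatBathProb (k : ℕ) :
    1 - heatBathProb lam zeta k = 1 / (1 + lam * (1 - zeta) ^ k) := by
  have hx : 0 ≤ lam * (1 - zeta) ^ k := mul_nonneg hlam (pow_nonneg (by linarith) k)
  unfold heatBathProb
  field_simp
  ring

lemma abs_heatBathProb_sub_le (hzeta₀ : 0 ≤ zeta) (k m : ℕ) :
    |heatBathProb lam zeta k - heatBathProb lam zeta m| ≤ lam * zeta * |(k : ℝ) - m| := by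
  have ht : 0 ≤ 1 - zeta := by linarith
  calc |heatBathProb lam zeta k - heatBathProb lam zeta m|
      ≤ |lam * (1 - zeta) ^ k - lam * (1 - zeta) ^ m| :=
        abs_div_one_add_sub_div_one_add_le (by positivity) (by positivity)
    _ = lam * |(1 - zeta) ^ k - (1 - zeta) ^ m| := by
        rw [← mul_sub, abs_mul, abs_of_nonneg hlam]
    _ ≤ lam * ((1 - (1 - zeta)) * |(k : ℝ) - m|) :=
        mul_le_mul_of_nonneg_left (abs_pow_sub_pow_le_of_le_one ht (by linarith) k m) hlam
    _ = lam * zeta * |(k : ℝ) - m| := by ring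

end HeatBath

section Coupling

variable {α β γ δ : Type*} [Fintype α] [Fintype β] [Fintype γ] [Fintype δ]

def IsCoupling (π : α × β → ℝ) (μ : α → ℝ) (ν : β → ℝ) : Prop :=
  (∀ x, 0 ≤ π x) ∧ (∀ a, ∑ b, π (a, b) = μ a) ∧ (∀ b, ∑ a, π (a, b) = ν b)

def pushforward [DecidableEq β] (f : α → β) (μ : α → ℝ) (b : β) : ℝ :=
  ∑ a, if f a = b then μ a else 0

lemma sum_pushforward_mul [DecidableEq β] (f : α → β) (μ : α → ℝ) (c : β → ℝ) :
    ∑ b, pushforward f μ b * c b = ∑ a, μ a * c (f a) := by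
  simp only [pushforward, Finset.sum_mul, ite_mul, zero_mul]
  rw [Finset.sum_comm]
  simp

lemma IsCoupling.map [DecidableEq γ] [DecidableEq δ] {π : α × β → ℝ} {μ : α → ℝ}
    {ν : β → ℝ} (h : IsCoupling π μ ν) (f : α → γ) (g : β → δ) :
    IsCoupling (pushforward (Prod.map f g) π) (pushforward f μ) (pushforward g ν) := by
  obtain ⟨hπ, hμ, hν⟩ := h
  refine ⟨fun x => Finset.sum_nonneg fun a _ => ?_, fun c => ?_, fun d => ?_⟩
  · split_ifs
    exacts [hπ a, le_rfl]
  · simp only [pushforward, Fintype.sum_prod_type, Prod.map, Prod.mk.injEq, ite_and]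
    rw [Finset.sum_comm]
    refine Finset.sum_congr rfl fun a _ => ?_
    split_ifs
    · rw [Finset.sum_comm, ← hμ]
      simp
    · simp
  · simp only [pushforward, Fintype.sum_prod_type, Prod.map, Prod.mk.injEq, ite_and]
    rw [Finset.sum_comm]
    simp only [Finset.sum_ite_irrel, Finset.sum_const_zero, Finset.sum_ite_eq, Finset.mem_univ,
      if_true, ← hν]
    rw [Finset.sum_comm]
    simp only [Finset.ite_sum_zero]

lemma IsCoupling.sum {ι : Type*} (s : Finset ι) {π : ι → α × β → ℝ} {μ : ι → α → ℝ}
    {ν : ι → β → ℝ} (h : ∀ i ∈ s, IsCoupling (π i) (μ i) (ν i)) :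
    IsCoupling (fun x => ∑ i ∈ s, π i x) (fun a => ∑ i ∈ s, μ i a)
      (fun b => ∑ i ∈ s, ν i b) := by
  refine ⟨fun x => Finset.sum_nonneg fun i hi => (h i hi).1 x, fun a => ?_, fun b => ?_⟩
  · rw [Finset.sum_comm]
    exact Finset.sum_congr rfl fun i hi => (h i hi).2.1 a
  · rw [Finset.sum_comm]
    exact Finset.sum_congr rfl fun i hi => (h i hi).2.2 b

lemma IsCoupling.const_mul {π : α × β → ℝ} {μ : α → ℝ} {ν : β → ℝ} (h : IsCoupling π μ ν)
    {c : ℝ} (hc : 0 ≤ c) :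
    IsCoupling (fun x => c * π x) (fun a => c * μ a) (fun b => c * ν b) := by
  refine ⟨fun x => mul_nonneg hc (h.1 x), fun a => ?_, fun b => ?_⟩
  · rw [← Finset.mul_sum, h.2.1 a]
  · rw [← Finset.mul_sum, h.2.2 b]

end Coupling

def bernoulliMass (p : ℝ) (i : Bool) : ℝ := if i then p else 1 - p

def bernoulliMaxCoupling (p q : ℝ) : Bool × Bool → ℝ
  | (true, true) => min p q
  | (true, false) => p - min p q
  | (false, true) => q - min p q
  | (false, false) => 1 - max p q

lemma isCoupling_bernoulliMaxCoupling {p q : ℝ} (hp : p ∈ Set.Icc (0 : ℝ) 1)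
    (hq : q ∈ Set.Icc (0 : ℝ) 1) :
    IsCoupling (bernoulliMaxCoupling p q) (bernoulliMass p) (bernoulliMass q) := by
  obtain ⟨hp₀, hp₁⟩ := hp
  obtain ⟨hq₀, hq₁⟩ := hq
  have := min_add_max p q
  refine ⟨fun ⟨i, j⟩ => ?_, fun i => ?_, fun j => ?_⟩
  · cases i <;> cases j <;> simp only [bernoulliMaxCoupling] <;>
      linarith [min_le_left p q, min_le_right p q, le_min hp₀ hq₀, max_le hp₁ hq₁]
  · cases i
    · simp only [bernoulliMaxCoupling, bernoulliMass, Fintype.sum_bool, Bool.false_eq_true,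
        if_false]
      linarith
    · simp [bernoulliMaxCoupling, bernoulliMass]
  · cases j
    · simp only [bernoulliMaxCoupling, bernoulliMass, Fintype.sum_bool, Bool.false_eq_true,
        if_false]
      linarith
    · simp [bernoulliMaxCoupling, bernoulliMass]

lemma sum_bernoulliMaxCoupling_mul (p q e : ℝ) :
    ∑ x, bernoulliMaxCoupling p q x * (e + if x.1 = x.2 then 0 else 1) = e + |p - q| := by
  have := min_add_max p q
  simp only [Fintype.sum_prod_type, Fintype.sum_bool, bernoulliMaxCoupling, Bool.true_eq_false,
    Bool.false_eq_true, if_true, if_false, ← max_sub_min_eq_abs']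
  linear_combination (-1 - e) * this

section VertexUpdate

variable {V : Type*} [DecidableEq V]

def withVertex (y : Finset V) (u : V) (i : Bool) : Finset V :=
  if i then insert u y else y.erase u

lemma withVertex_symmDiff_withVertex (y z : Finset V) (u : V) (i j : Bool) :
    withVertex y u i ∆ withVertex z u j =
      if i = j then (y ∆ z).erase u else insert u ((y ∆ z).erase u) := by
  ext v
  by_cases hv : v = u <;> cases i <;> cases j <;>
    simp [withVertex, Finset.mem_symmDiff, hv]

lemma card_withVertex_symmDiff_withVertex (y z : Finset V) (u : V) (i j : Bool) :
    (#(withVertex y u i ∆ withVertex z u j) : ℝ) =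
      #((y ∆ z).erase u) + if i = j then 0 else 1 := by
  rw [withVertex_symmDiff_withVertex]
  split_ifs
  · simp
  · simp [Finset.card_insert_of_notMem (Finset.notMem_erase u _)]

lemma pushforward_withVertex_bernoulliMass [Fintype V] (y : Finset V) (u : V) (p : ℝ)
    (a : Finset V) :
    pushforward (withVertex y u) (bernoulliMass p) a =
      (if a = insert u y then p else 0) + (if a = y.erase u then 1 - p else 0) := by
  simp [pushforward, withVertex, bernoulliMass, eq_comm]

lemma card_filter_le_card_filter_add_card_filter_symmDiff (p : V → Prop) [DecidablePred p]
    (s t : Finset V) : #(s.filter p) ≤ #(t.filter p) + #((s ∆ t).filter p) := by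
  refine (Finset.card_le_card fun v hv => ?_).trans (Finset.card_union_le _ _)
  simp only [Finset.mem_filter, Finset.mem_union, Finset.mem_symmDiff] at hv ⊢
  tauto

end VertexUpdate

section Glauber

variable {V : Type*} [Fintype V] [DecidableEq V] (H : SimpleGraph V)

lemma vertexGlauberStep_eq {lam zeta : ℝ} (hlam : 0 ≤ lam) (hzeta : zeta ≤ 1) (y : Finset V) :
    vertexGlauberStep H lam zeta y = fun a => (1 / (Fintype.card V : ℝ)) *
      ∑ u, pushforward (withVertex y u)
        (bernoulliMass (heatBathProb lam zeta (inducedDeg H y u))) a := by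
  ext a
  simp only [pushforward_withVertex_bernoulliMass, one_sub_heatBathProb hlam hzeta]
  rfl

def glauberCoupling (lam zeta : ℝ) (y z : Finset V) (x : Finset V × Finset V) : ℝ :=
  (1 / (Fintype.card V : ℝ)) * ∑ u, pushforward (Prod.map (withVertex y u) (withVertex z u))
    (bernoulliMaxCoupling (heatBathProb lam zeta (inducedDeg H y u))
      (heatBathProb lam zeta (inducedDeg H z u))) x

lemma isCoupling_glauberCoupling {lam zeta : ℝ} (hlam : 0 ≤ lam) (hzeta : zeta ≤ 1)
    (y z : Finset V) :
    IsCoupling (glauberCoupling H lam zeta y z) (vertexGlauberStep H lam zeta y)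
      (vertexGlauberStep H lam zeta z) := by
  rw [vertexGlauberStep_eq H hlam hzeta, vertexGlauberStep_eq H hlam hzeta]
  refine IsCoupling.const_mul (IsCoupling.sum _ fun u _ => ?_) (by positivity)
  exact (isCoupling_bernoulliMaxCoupling (heatBathProb_mem_Icc hlam hzeta _)
    (heatBathProb_mem_Icc hlam hzeta _)).map _ _

lemma sum_glauberCoupling_mul_card_symmDiff (lam zeta : ℝ) (y z : Finset V) :
    ∑ x, glauberCoupling H lam zeta y z x * #(x.1 ∆ x.2) =
      (1 / (Fintype.card V : ℝ)) * ∑ u, (#((y ∆ z).erase u) +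
        |heatBathProb lam zeta (inducedDeg H y u) - heatBathProb lam zeta (inducedDeg H z u)|) := by
  simp only [glauberCoupling, mul_assoc, ← Finset.mul_sum, Finset.sum_mul]
  rw [Finset.sum_comm]
  congr 1
  refine Finset.sum_congr rfl fun u _ => ?_
  rw [sum_pushforward_mul]
  simp only [Prod.map, card_withVertex_symmDiff_withVertex]
  exact sum_bernoulliMaxCoupling_mul _ _ _

end Glauber

section Degree

variable {V : Type*} [Fintype V] (H : SimpleGraph V)

lemma inducedDeg_eq_card_filter (y : Finset V) (u : V) :
    inducedDeg H y u = #(y.filter (H.Adj u)) := by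
  rw [inducedDeg, Nat.card_eq_fintype_card, Fintype.card_subtype]
  congr 1
  ext w
  simp

lemma card_filter_adj_le_maxDegV (w : V) : #(Finset.univ.filter (H.Adj · w)) ≤ maxDegV H := by
  have hdeg : Nat.card (H.neighborSet w) = #(Finset.univ.filter (H.Adj · w)) := by
    rw [Nat.card_eq_fintype_card, ← Set.toFinset_card]
    congr 1
    ext v
    simp [H.adj_comm]
  exact hdeg ▸ Finset.le_sup (f := fun v => Nat.card (H.neighborSet v)) (Finset.mem_univ w)

lemma sum_card_filter_adj_le (s : Finset V) :
    ∑ u, #(s.filter (H.Adj u)) ≤ maxDegV H * #s := by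
  calc ∑ u, #(s.filter (H.Adj u)) = ∑ w ∈ s, #(Finset.univ.filter (H.Adj · w)) :=
        Finset.sum_card_bipartiteAbove_eq_sum_card_bipartiteBelow H.Adj
    _ ≤ ∑ _w ∈ s, maxDegV H := Finset.sum_le_sum fun w _ => card_filter_adj_le_maxDegV H w
    _ = maxDegV H * #s := by rw [Finset.sum_const, smul_eq_mul, mul_comm]

end Degree

section Counting

variable {V : Type*} [Fintype V] [DecidableEq V]

lemma sum_card_erase (s : Finset V) :
    ∑ u, (#(s.erase u) : ℝ) = (Fintype.card V - 1) * #s := by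
  have hcard (u : V) : (#(s.erase u) : ℝ) = #s - if u ∈ s then 1 else 0 := by
    split_ifs with hu
    · rw [← Finset.card_erase_add_one hu]
      push_cast
      ring
    · simp [Finset.erase_eq_of_notMem hu]
  simp only [hcard, Finset.sum_sub_distrib, Finset.sum_const, Finset.card_univ, Finset.sum_boole,
    Finset.filter_mem_eq_inter, Finset.univ_inter, nsmul_eq_mul]
  ring

lemma abs_inducedDeg_sub_inducedDeg_le (H : SimpleGraph V) (y z : Finset V) (u : V) :
    |(inducedDeg H y u : ℝ) - inducedDeg H z u| ≤ #((y ∆ z).filter (H.Adj u)) := by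
  have hyz : (#(y.filter (H.Adj u)) : ℝ) ≤ #(z.filter (H.Adj u)) + #((y ∆ z).filter (H.Adj u)) := by
    exact_mod_cast card_filter_le_card_filter_add_card_filter_symmDiff (H.Adj u) y z
  have hzy : (#(z.filter (H.Adj u)) : ℝ) ≤ #(y.filter (H.Adj u)) + #((y ∆ z).filter (H.Adj u)) := by
    rw [symmDiff_comm]
    exact_mod_cast card_filter_le_card_filter_add_card_filter_symmDiff (H.Adj u) z y
  rw [inducedDeg_eq_card_filter, inducedDeg_eq_card_filter, abs_sub_le_iff]
  constructor <;> linarith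

lemma sum_abs_heatBathProb_sub_le (H : SimpleGraph V) {lam zeta : ℝ} (hlam : 0 ≤ lam)
    (hzeta : zeta ∈ Set.Icc (0 : ℝ) 1) (y z : Finset V) :
    ∑ u, |heatBathProb lam zeta (inducedDeg H y u) - heatBathProb lam zeta (inducedDeg H z u)| ≤
      maxDegV H * lam * zeta * #(y ∆ z) := by
  have hlz : 0 ≤ lam * zeta := mul_nonneg hlam hzeta.1
  calc ∑ u, |heatBathProb lam zeta (inducedDeg H y u) - heatBathProb lam zeta (inducedDeg H z u)|
      ≤ ∑ u, lam * zeta * (#((y ∆ z).filter (H.Adj u)) : ℝ) := by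
        refine Finset.sum_le_sum fun u _ => ?_
        exact (abs_heatBathProb_sub_le hlam hzeta.2 hzeta.1 _ _).trans
          (mul_le_mul_of_nonneg_left (abs_inducedDeg_sub_inducedDeg_le H y z u) hlz)
    _ ≤ lam * zeta * (maxDegV H * #(y ∆ z)) := by
        rw [← Finset.mul_sum]
        exact mul_le_mul_of_nonneg_left (by exact_mod_cast sum_card_filter_adj_le H _) hlz
    _ = maxDegV H * lam * zeta * #(y ∆ z) := by ring

end Counting

theorem glauber_vertex_contraction_general
    (V : Type) [Fintype V] [DecidableEq V]
    (H : SimpleGraph V) (lam zeta : ℝ) (hlam : 0 ≤ lam) (hzeta : zeta ∈ Set.Icc (0 : ℝ) 1) :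
    ∀ y z : Finset V,
      ∃ π : Finset V × Finset V → ℝ,
        (∀ x, 0 ≤ π x) ∧
        (∀ a : Finset V, ∑ b : Finset V, π (a, b) = vertexGlauberStep H lam zeta y a) ∧
        (∀ b : Finset V, ∑ a : Finset V, π (a, b) = vertexGlauberStep H lam zeta z b) ∧
        (∑ a : Finset V, ∑ b : Finset V, π (a, b) * ((a ∆ b).card : ℝ)) ≤
          (1 - (1 - (maxDegV H : ℝ) * lam * zeta) / (Fintype.card V : ℝ)) *
            ((y ∆ z).card : ℝ) := by
  intro y z
  obtain ⟨hnonneg, hleft, hright⟩ := isCoupling_glauberCoupling H hlam hzeta.2 y z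
  refine ⟨glauberCoupling H lam zeta y z, hnonneg, hleft, hright, ?_⟩
  rw [← Fintype.sum_prod_type', sum_glauberCoupling_mul_card_symmDiff, Finset.sum_add_distrib,
    sum_card_erase]
  exact one_div_mul_sub_one_mul_add_le (Nat.cast_nonneg _) (Nat.cast_nonneg _)
    (sum_abs_heatBathProb_sub_le H hlam hzeta y z)

/-- **Lemma (contraction of the vertex Glauber dynamics `P_{H,λ,ζ}`).** -/
theorem glauber_vertex_contraction
    (V : Type) [Fintype V] [DecidableEq V] (hV : Nonempty V)
    (H : SimpleGraph V) (lam zeta : ℝ) (hlam : 0 ≤ lam) (hzeta : zeta ∈ Set.Icc (0 : ℝ) 1) :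
    ∀ y z : Finset V,
      ∃ π : Finset V × Finset V → ℝ,
        (∀ x, 0 ≤ π x) ∧
        (∀ a : Finset V, ∑ b : Finset V, π (a, b) = vertexGlauberStep H lam zeta y a) ∧
        (∀ b : Finset V, ∑ a : Finset V, π (a, b) = vertexGlauberStep H lam zeta z b) ∧
        (∑ a : Finset V, ∑ b : Finset V, π (a, b) * ((a ∆ b).card : ℝ)) ≤
          (1 - (1 - (maxDegV H : ℝ) * lam * zeta) / (Fintype.card V : ℝ)) *
            ((y ∆ z).card : ℝ) :=
  glauber_vertex_contraction_general V H lam zeta hlam hzeta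
end
end
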